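/- arXiv:2603.25939 — 2 statements merged into one kernel-verified Lean document; each statement's English description precedes it below -/
import Mathlib

section
/- C₋₁(H) is a closed two-sided module over the C*-algebra C₁(H): if A ∈ C₁(H) and B ∈ C₋₁(H), then AB ∈ C₋₁(H) and BA ∈ C₋₁(H), and C₋₁(H) is norm-closed. -/
/-!
Multiplying by unitaries is isometric in a C*-algebra, so the identity
`U (A B) U - A B = (U A U* - A) (U B U) + A (U B U - B)`, and its mirror image for `B A`
(through `U* A U - A`, which has the same norm as `U A U* - A`), bound the defect of a product
by the defects of its factors. Closedness holds because the maps `B ↦ U B U - B` are uniformly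
`2`-Lipschitz, hence equicontinuous.
-/

open Filter Topology

section Ring

variable {R : Type*} [Ring R]

theorem sandwich_mul_sub_eq_left {U V : R} (hVU : V * U = 1) (A B : R) :
    U * (A * B) * U - A * B = (U * A * V - A) * (U * B * U) + A * (U * B * U - B) := by
  have hconj : U * A * V * (U * B * U) = U * (A * B) * U := by
    calc U * A * V * (U * B * U) = U * A * (V * U) * B * U := by noncomm_ring
      _ = U * (A * B) * U := by rw [hVU]; noncomm_ring
  rw [sub_mul, mul_sub, hconj]
  abel

theorem sandwich_mul_sub_eq_right {U V : R} (hUV : U * V = 1) (A B : R) :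
    U * (B * A) * U - B * A = (U * B * U - B) * (V * A * U) + B * (V * A * U - A) := by
  have hconj : U * B * U * (V * A * U) = U * (B * A) * U := by
    calc U * B * U * (V * A * U) = U * B * (U * V) * A * U := by noncomm_ring
      _ = U * (B * A) * U := by rw [hUV]; noncomm_ring
  rw [sub_mul, mul_sub, hconj]
  abel

end Ring

section CStarRing

variable {R : Type*} [NormedRing R] [StarRing R] [CStarRing R]

theorem norm_mul_mul_of_mem_unitary {U V : R} (hU : U ∈ unitary R) (hV : V ∈ unitary R)
    (X : R) : ‖U * X * V‖ = ‖X‖ := by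
  rw [CStarRing.norm_mul_mem_unitary _ hV, CStarRing.norm_mem_unitary_mul _ hU]

theorem norm_star_conj_sub_of_mem_unitary {U : R} (hU : U ∈ unitary R) (A : R) :
    ‖star U * A * U - A‖ = ‖U * A * star U - A‖ := by
  have hconj : star U * (U * A * star U - A) * U = A - star U * A * U := by
    calc star U * (U * A * star U - A) * U
        = (star U * U) * A * (star U * U) - star U * A * U := by noncomm_ring
      _ = A - star U * A * U := by rw [Unitary.star_mul_self_of_mem hU]; noncomm_ring
  rw [norm_sub_rev, ← hconj, norm_mul_mul_of_mem_unitary (Unitary.star_mem hU) hU]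

variable {ι : Type*} (l : Filter ι) (u : ι → R)

/-- The paper's `C₁` for the unitary family `u` along `l`. -/
def conjContinuous : Set R :=
  {A | Tendsto (fun i => ‖u i * A * star (u i) - A‖) l (𝓝 0)}

/-- The paper's `C₋₁` for the unitary family `u` along `l`. -/
def sandwichContinuous : Set R :=
  {B | Tendsto (fun i => ‖u i * B * u i - B‖) l (𝓝 0)}

variable {l u}

theorem mul_mem_sandwichContinuous_left (hu : ∀ i, u i ∈ unitary R) {A B : R}
    (hA : A ∈ conjContinuous l u) (hB : B ∈ sandwichContinuous l u) :
    A * B ∈ sandwichContinuous l u := by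
  refine squeeze_zero (fun _ => norm_nonneg _)
    (g := fun i => ‖u i * A * star (u i) - A‖ * ‖B‖ + ‖A‖ * ‖u i * B * u i - B‖)
    (fun i => ?_) (by simpa using (hA.mul_const ‖B‖).add (hB.const_mul ‖A‖))
  rw [sandwich_mul_sub_eq_left (Unitary.star_mul_self_of_mem (hu i))]
  refine (norm_add_le _ _).trans (add_le_add ((norm_mul_le _ _).trans_eq ?_) (norm_mul_le _ _))
  rw [norm_mul_mul_of_mem_unitary (hu i) (hu i)]

theorem mul_mem_sandwichContinuous_right (hu : ∀ i, u i ∈ unitary R) {A B : R}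
    (hA : A ∈ conjContinuous l u) (hB : B ∈ sandwichContinuous l u) :
    B * A ∈ sandwichContinuous l u := by
  have hA' : Tendsto (fun i => ‖star (u i) * A * u i - A‖) l (𝓝 0) := by
    simpa only [norm_star_conj_sub_of_mem_unitary (hu _)] using hA.out
  refine squeeze_zero (fun _ => norm_nonneg _)
    (g := fun i => ‖u i * B * u i - B‖ * ‖A‖ + ‖B‖ * ‖star (u i) * A * u i - A‖)
    (fun i => ?_) (by simpa using (hB.mul_const ‖A‖).add (hA'.const_mul ‖B‖))
  rw [sandwich_mul_sub_eq_right (Unitary.mul_star_self_of_mem (hu i))]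
  refine (norm_add_le _ _).trans (add_le_add ((norm_mul_le _ _).trans_eq ?_) (norm_mul_le _ _))
  rw [norm_mul_mul_of_mem_unitary (Unitary.star_mem (hu i)) (hu i)]

theorem isClosed_sandwichContinuous (hu : ∀ i, u i ∈ unitary R) :
    IsClosed (sandwichContinuous l u) := by
  have hLipschitz : ∀ B C i,
      dist (u i * B * u i - B) (u i * C * u i - C) ≤ 2 * dist B C := fun B C i => by
    rw [dist_eq_norm, dist_eq_norm]
    calc ‖u i * B * u i - B - (u i * C * u i - C)‖ = ‖u i * (B - C) * u i - (B - C)‖ := by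
          congr 1; noncomm_ring
      _ ≤ ‖u i * (B - C) * u i‖ + ‖B - C‖ := norm_sub_le _ _
      _ = 2 * ‖B - C‖ := by rw [norm_mul_mul_of_mem_unitary (hu i) (hu i)]; ring
  have hequi : Equicontinuous fun i (B : R) => u i * B * u i - B :=
    Metric.equicontinuous_of_continuity_modulus (fun t => 2 * t)
      (by simpa using (continuous_const_mul (2 : ℝ)).tendsto 0) _ hLipschitz
  simpa only [sandwichContinuous, ← tendsto_zero_iff_norm_tendsto_zero]
    using hequi.isClosed_setOfPred_tendsto (l := l) continuous_const

end CStarRing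

open ContinuousLinearMap in
theorem Cminus1_closed_twoSided_module_general {n : ℕ}
    {H : Type*} [NormedAddCommGroup H] [InnerProductSpace ℂ H] [CompleteSpace H]
    (W : EuclideanSpace ℝ (Fin (2 * n)) → (H →L[ℂ] H))
    (hW_unitary : ∀ z, W z * ContinuousLinearMap.adjoint (W z) = 1 ∧
      ContinuousLinearMap.adjoint (W z) * W z = 1) :
    (∀ A ∈ {A : H →L[ℂ] H |
        Tendsto (fun z => ‖W z * A * ContinuousLinearMap.adjoint (W z) - A‖)
          (𝓝 (0 : EuclideanSpace ℝ (Fin (2 * n)))) (𝓝 0)},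
      ∀ B ∈ {B : H →L[ℂ] H | Tendsto (fun z => ‖W z * B * W z - B‖)
          (𝓝 (0 : EuclideanSpace ℝ (Fin (2 * n)))) (𝓝 0)},
        A * B ∈ {B : H →L[ℂ] H | Tendsto (fun z => ‖W z * B * W z - B‖)
            (𝓝 (0 : EuclideanSpace ℝ (Fin (2 * n)))) (𝓝 0)} ∧
        B * A ∈ {B : H →L[ℂ] H | Tendsto (fun z => ‖W z * B * W z - B‖)
            (𝓝 (0 : EuclideanSpace ℝ (Fin (2 * n)))) (𝓝 0)}) ∧
    IsClosed {B : H →L[ℂ] H | Tendsto (fun z => ‖W z * B * W z - B‖)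
        (𝓝 (0 : EuclideanSpace ℝ (Fin (2 * n)))) (𝓝 0)} := by
  have hu : ∀ z, W z ∈ unitary (H →L[ℂ] H) := fun z => by
    rw [Unitary.mem_iff, star_eq_adjoint]
    exact (hW_unitary z).symm
  exact ⟨fun A hA B hB => ⟨mul_mem_sandwichContinuous_left hu hA hB,
    mul_mem_sandwichContinuous_right hu hA hB⟩, isClosed_sandwichContinuous hu⟩

/-- `C₋₁(H)` is a norm-closed two-sided module over the C*-algebra `C₁(H)`:
if `A ∈ C₁(H)` and `B ∈ C₋₁(H)` then `AB, BA ∈ C₋₁(H)`, and `C₋₁(H)` is closed. -/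
theorem Cminus1_closed_twoSided_module {n : ℕ}
    {H : Type*} [NormedAddCommGroup H] [InnerProductSpace ℂ H] [CompleteSpace H]
    (W : EuclideanSpace ℝ (Fin (2 * n)) → (H →L[ℂ] H))
    (σ : EuclideanSpace ℝ (Fin (2 * n)) →ₗ[ℝ] EuclideanSpace ℝ (Fin (2 * n)) →ₗ[ℝ] ℝ)
    (hW_unitary : ∀ z, W z * ContinuousLinearMap.adjoint (W z) = 1 ∧
      ContinuousLinearMap.adjoint (W z) * W z = 1)
    (hW_adj : ∀ z, ContinuousLinearMap.adjoint (W z) = W (-z))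
    (hCCR : ∀ z w, W z * W w = Complex.exp (-Complex.I * (σ z w : ℝ) / 2) • W (z + w)) :
    (∀ A ∈ {A : H →L[ℂ] H |
        Tendsto (fun z => ‖W z * A * ContinuousLinearMap.adjoint (W z) - A‖)
          (𝓝 (0 : EuclideanSpace ℝ (Fin (2 * n)))) (𝓝 0)},
      ∀ B ∈ {B : H →L[ℂ] H | Tendsto (fun z => ‖W z * B * W z - B‖)
          (𝓝 (0 : EuclideanSpace ℝ (Fin (2 * n)))) (𝓝 0)},
        A * B ∈ {B : H →L[ℂ] H | Tendsto (fun z => ‖W z * B * W z - B‖)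
            (𝓝 (0 : EuclideanSpace ℝ (Fin (2 * n)))) (𝓝 0)} ∧
        B * A ∈ {B : H →L[ℂ] H | Tendsto (fun z => ‖W z * B * W z - B‖)
            (𝓝 (0 : EuclideanSpace ℝ (Fin (2 * n)))) (𝓝 0)}) ∧
    IsClosed {B : H →L[ℂ] H | Tendsto (fun z => ‖W z * B * W z - B‖)
        (𝓝 (0 : EuclideanSpace ℝ (Fin (2 * n)))) (𝓝 0)} :=
  Cminus1_closed_twoSided_module_general W hW_unitary
end

section
/- Let X be a finite-dimensional inner product space, V₁,…,V_d ⊆ X subspaces, and f₁,…,f_d : X → [0,∞) functions such that for each j, sup_{w ∈ Vⱼ^⊥} fⱼ(v + w) → 0 as |v| → ∞ with v ∈ Vⱼ. Let f = min_j fⱼ and V = V₁ + ⋯ + V_d. Then sup_{w ∈ V^⊥} f(v + w) → 0 as |v| → ∞ with v ∈ V. -/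
/-!
On `V = ⨆ j, V j` the linear map `v ↦ (P_{V j} v)_j` is injective, since its kernel lies in
`V ⊓ Vᗮ`; in finite dimension it is therefore bounded below, so a long `v ∈ V` has a long
projection `p` onto some `V j`. Writing `v + w = p + ((v - p) + w)` with `(v - p) + w ∈ (V j)ᗮ`
for `w ∈ Vᗮ ⊆ (V j)ᗮ`, the decay of `f j` makes `f j (v + w)`, hence the minimum, small.
-/

namespace Submodule

variable {𝕜 X ι : Type*} [RCLike 𝕜] [NormedAddCommGroup X] [InnerProductSpace 𝕜 X]
  (V : ι → Submodule 𝕜 X)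

theorem eq_zero_of_mem_iSup_of_forall_mem_orthogonal {v : X} (hv : v ∈ ⨆ i, V i)
    (hv_perp : ∀ i, v ∈ (V i)ᗮ) : v = 0 := by
  have hv_perp' : v ∈ (⨆ i, V i)ᗮ := iInf_orthogonal V ▸ mem_iInf _ |>.2 hv_perp
  simpa using (inf_orthogonal_eq_bot _).le ⟨hv, hv_perp'⟩

variable [Fintype ι] [FiniteDimensional 𝕜 X]

theorem exists_norm_le_mul_norm_starProjection :
    ∃ K : ℝ, 0 ≤ K ∧ ∀ v ∈ ⨆ i, V i, ‖v‖ ≤ K * ‖fun i ↦ (V i).starProjection v‖ := by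
  let T : (⨆ i, V i : Submodule 𝕜 X) →ₗ[𝕜] ι → X :=
    LinearMap.pi fun i ↦ (V i).starProjection.toLinearMap ∘ₗ (⨆ i, V i).subtype
  have hT : Function.Injective T := by
    refine (injective_iff_map_eq_zero T).2 fun v hv ↦ Subtype.ext ?_
    exact eq_zero_of_mem_iSup_of_forall_mem_orthogonal V v.2 fun i ↦
      (starProjection_apply_eq_zero_iff _).1 (congrFun hv i)
  obtain ⟨K, -, hK⟩ := T.injective_iff_antilipschitz.1 hT
  exact ⟨K, K.2, fun v hv ↦ ZeroHomClass.bound_of_antilipschitz T hK ⟨v, hv⟩⟩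

theorem exists_lt_norm_starProjection (R : ℝ) :
    ∃ R' : ℝ, ∀ v ∈ ⨆ i, V i, R' < ‖v‖ → ∃ i, R < ‖(V i).starProjection v‖ := by
  obtain ⟨K, hK0, hK⟩ := exists_norm_le_mul_norm_starProjection V
  refine ⟨K * max R 0, fun v hv hvR ↦ ?_⟩
  by_contra! hsmall
  have hT : ‖fun i ↦ (V i).starProjection v‖ ≤ max R 0 :=
    (pi_norm_le_iff_of_nonneg (le_max_right _ _)).2 fun i ↦ (hsmall i).trans (le_max_left _ _)
  exact hvR.not_ge ((hK v hv).trans (mul_le_mul_of_nonneg_left hT hK0))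

end Submodule

theorem min_decay_on_sum_of_subspaces_general
    {X : Type*} [NormedAddCommGroup X] [InnerProductSpace ℝ X] [FiniteDimensional ℝ X]
    {d : ℕ} (V : Fin d → Submodule ℝ X) (f : Fin d → X → ℝ)
    (hf : ∀ j, ∀ ε > (0 : ℝ), ∃ R : ℝ, ∀ v ∈ V j, R < ‖v‖ →
      ∀ w ∈ (V j)ᗮ, f j (v + w) < ε) :
    ∀ ε > (0 : ℝ), ∃ R : ℝ, ∀ v ∈ (⨆ j, V j), R < ‖v‖ →
      ∀ w ∈ (⨆ j, V j)ᗮ, (⨅ j, f j (v + w)) < ε := by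
  intro ε hε
  choose R hR using fun j ↦ hf j ε hε
  obtain ⟨R₀, hR₀⟩ := Finite.exists_le R
  obtain ⟨R', hR'⟩ := Submodule.exists_lt_norm_starProjection V R₀
  refine ⟨R', fun v hv hvR w hw ↦ ?_⟩
  obtain ⟨j, hj⟩ := hR' v hv hvR
  have hfj := hR j _ ((V j).starProjection_apply_mem v) ((hR₀ j).trans_lt hj)
    (v - (V j).starProjection v + w)
    (add_mem (Submodule.sub_starProjection_mem_orthogonal v)
      (Submodule.orthogonal_le (le_iSup V j) hw))
  rw [← add_assoc, add_sub_cancel] at hfj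
  exact (ciInf_le (Set.finite_range _).bddBelow j).trans_lt hfj

/-- If each `fⱼ` decays uniformly over `Vⱼ^⊥` as `|v| → ∞` in `Vⱼ`, then
`f = min_j fⱼ` decays uniformly over `V^⊥` as `|v| → ∞` in `V = V₁ + ⋯ + V_d`. -/
theorem min_decay_on_sum_of_subspaces
    {X : Type*} [NormedAddCommGroup X] [InnerProductSpace ℝ X] [FiniteDimensional ℝ X]
    {d : ℕ} (hd : 0 < d) (V : Fin d → Submodule ℝ X) (f : Fin d → X → ℝ)
    (hf_nonneg : ∀ j x, 0 ≤ f j x)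
    (hf : ∀ j, ∀ ε > (0 : ℝ), ∃ R : ℝ, ∀ v ∈ V j, R < ‖v‖ →
      ∀ w ∈ (V j)ᗮ, f j (v + w) < ε) :
    ∀ ε > (0 : ℝ), ∃ R : ℝ, ∀ v ∈ (⨆ j, V j), R < ‖v‖ →
      ∀ w ∈ (⨆ j, V j)ᗮ, (⨅ j, f j (v + w)) < ε :=
  min_decay_on_sum_of_subspaces_general V f hf
end
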